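/- Let (Γ,μ) be a weighted graph satisfying (p0) and (VD), and let F∈W0 be such that PLE(F) holds. Then there is a c>0 such that for all x∈Γ and R>0, E(x,R) ≥ c·F(x,R). -/

import Mathlib

open scoped Classical BigOperators

noncomputable section

/-- A weighted graph: a countable infinite connected graph with symmetric
positive edge weights on edges. -/
structure WGraph (Γ : Type*) where
  adj : Γ → Γ → Prop
  adj_symm : ∀ x y, adj x y → adj y x
  w : Γ → Γ → ℝ
  w_symm : ∀ x y, w x y = w y x
  w_pos : ∀ x y, adj x y → 0 < w x y
  w_zero : ∀ x y, ¬ adj x y → w x y = 0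
  connected : ∀ x y, Relation.ReflTransGen adj x y
  inf : Infinite Γ
  cnt : Countable Γ

namespace WGraph

variable {Γ : Type*}

/-- n-fold adjacency: there is a path of length n. -/
def adjN (G : WGraph Γ) : ℕ → Γ → Γ → Prop
  | 0 => fun x y => x = y
  | (n+1) => fun x y => ∃ z, G.adj x z ∧ adjN G n z y

variable (G : WGraph Γ)

/-- μ(x) = Σ_{y} μ_{x,y}. -/
def vtx (x : Γ) : ℝ := ∑' y, G.w x y

/-- μ(A) for a set of vertices. -/
def setVol (A : Set Γ) : ℝ := ∑' y : A, G.vtx y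

/-- graph (shortest path) distance. -/
def dist (x y : Γ) : ℕ := sInf {n | G.adjN n x y}

/-- open metric ball B(x,r). -/
def ball (x : Γ) (r : ℝ) : Set Γ := {y | (G.dist x y : ℝ) < r}

/-- V(x,r) = μ(B(x,r)). -/
def vol (x : Γ) (r : ℝ) : ℝ := G.setVol (G.ball x r)

/-- one-step transition probability P(x,y) = μ_{xy}/μ(x). -/
def kerP (x y : Γ) : ℝ := G.w x y / G.vtx x

/-- n-step transition probability of the walk killed outside A. -/
def killedP (G : WGraph Γ) (A : Set Γ) : ℕ → Γ → Γ → ℝ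
  | 0 => fun x y => if x = y ∧ x ∈ A then 1 else 0
  | (n+1) => fun x y => if x ∈ A then ∑' z, G.kerP x z * killedP G A n z y else 0

/-- P_n(x,y). -/
def transP (n : ℕ) (x y : Γ) : ℝ := G.killedP Set.univ n x y

/-- heat kernel p_n(x,y) = P_n(x,y)/μ(y). -/
def hk (n : ℕ) (x y : Γ) : ℝ := G.transP n x y / G.vtx y

/-- p̃_n = p_n + p_{n+1}. -/
def hkt (n : ℕ) (x y : Γ) : ℝ := G.hk n x y + G.hk (n+1) x y

/-- Dirichlet heat kernel p_n^A. -/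
def hkA (A : Set Γ) (n : ℕ) (x y : Γ) : ℝ := G.killedP A n x y / G.vtx y

/-- p̃_n^A = p_n^A + p_{n+1}^A. -/
def hktA (A : Set Γ) (n : ℕ) (x y : Γ) : ℝ := G.hkA A n x y + G.hkA A (n+1) x y

/-- local Green function G^A(x,y) = Σ_k P_k^A(x,y). -/
def greenF (A : Set Γ) (x y : Γ) : ℝ := ∑' n, G.killedP A n x y

/-- local Green kernel g^A(x,y) = G^A(x,y)/μ(y). -/
def greenK (A : Set Γ) (x y : Γ) : ℝ := G.greenF A x y / G.vtx y

/-- mean exit time E_x(A) = Σ_{y∈A} G^A(x,y). -/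
def exitE (A : Set Γ) (x : Γ) : ℝ := ∑' y : A, G.greenF A x y

/-- E(x,r) = E_x(B(x,r)). -/
def meanE (x : Γ) (r : ℝ) : ℝ := G.exitE (G.ball x r) x

/-- the mean exit time as a function Γ × ℕ → ℝ. -/
def EF : Γ → ℕ → ℝ := fun x R => G.meanE x (R : ℝ)

/-- Ē(x,r) = max_{y ∈ B(x,r)} E_y(B(x,r)). -/
def maxE (x : Γ) (r : ℝ) : ℝ :=
  sSup {e | ∃ y ∈ G.ball x r, e = G.exitE (G.ball x r) y}

/-- Markov operator P. -/
def Pop (u : Γ → ℝ) (x : Γ) : ℝ := ∑' y, G.kerP x y * u y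

/-- Markov operator of the killed walk. -/
def PopB (B : Set Γ) (u : Γ → ℝ) (x : Γ) : ℝ :=
  ∑' y, if y ∈ B then G.kerP x y * u y else 0

/-- Dirichlet Laplacian Δ^B = P^B - I. -/
def lapB (B : Set Γ) (u : Γ → ℝ) (x : Γ) : ℝ := G.PopB B u x - u x

/-- Dirichlet form E(f,f). -/
def dform (f : Γ → ℝ) : ℝ :=
  (1/2) * ∑' p : Γ × Γ, G.w p.1 p.2 * (f p.1 - f p.2)^2

/-- effective resistance between disjoint sets. -/
def res (A B : Set Γ) : ℝ :=
  (sInf {e | ∃ f : Γ → ℝ, (∀ x ∈ A, f x = 1) ∧ (∀ x ∈ B, f x = 0) ∧ e = G.dform f})⁻¹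

/-- ρ(x,r,R), resistance of the annulus. -/
def resA (x : Γ) (r R : ℝ) : ℝ := G.res (G.ball x r) (G.ball x R)ᶜ

/-- v(x,r,R) = V(x,R) - V(x,r). -/
def volA (x : Γ) (r R : ℝ) : ℝ := G.vol x R - G.vol x r

/-- smallest Dirichlet eigenvalue λ(A) of -Δ^A. -/
def lam (A : Set Γ) : ℝ :=
  sInf {e | ∃ f : Γ → ℝ, f ≠ 0 ∧ (∀ x ∉ A, f x = 0) ∧
        e = G.dform f / (∑' x, (f x)^2 * G.vtx x)}

/-- Σ_{y∈A} v(y) μ(y). -/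
def wsum (A : Set Γ) (v : Γ → ℝ) : ℝ := ∑' y : A, v y * G.vtx y

/-- space-time sum Σ_{a ≤ i ≤ b} Σ_{y∈A} u_i(y) μ(y). -/
def stsum (A : Set Γ) (a b : ℝ) (u : ℕ → Γ → ℝ) : ℝ :=
  ∑' i : ℕ, if a ≤ (i:ℝ) ∧ (i:ℝ) ≤ b then G.wsum A (u i) else 0

/-! ### Conditions -/

/-- (p0): controlled weights. -/
def p0cond : Prop := ∃ p > (0:ℝ), ∀ x y, G.adj x y → p ≤ G.kerP x y

/-- (VD): volume doubling. -/
def VD : Prop := ∃ D > (0:ℝ), ∀ (x : Γ) (R : ℝ), 0 < R → G.vol x (2*R) ≤ D * G.vol x R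

/-- u is harmonic on A. -/
def harmOn (u : Γ → ℝ) (A : Set Γ) : Prop := ∀ x ∈ A, G.Pop u x = u x

/-- (H): elliptic Harnack inequality. -/
def EH : Prop := ∃ C > (0:ℝ), ∀ (x : Γ) (R : ℕ), 0 < R →
  ∀ u : Γ → ℝ, (∀ y, 0 ≤ u y) → G.harmOn u (G.ball x (2*(R:ℝ))) →
    ∀ y ∈ G.ball x (R:ℝ), ∀ z ∈ G.ball x (R:ℝ), u y ≤ C * u z

/-- (wTC): weak time comparison principle. -/
def wTC : Prop := ∃ C > (1:ℝ), ∀ (x y : Γ) (R : ℕ), 0 < R → G.dist x y < R →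
  G.meanE x (R:ℝ) ≤ C * G.meanE y (R:ℝ)

/-- (TC): time comparison principle. -/
def TC : Prop := ∃ C > (1:ℝ), ∀ (x y : Γ) (R : ℕ), 0 < R → G.dist x y < R →
  G.meanE x (2*(R:ℝ)) ≤ C * G.meanE y (R:ℝ)

/-- (ER): the Einstein relation E(x,2R) ≃ ρ(x,R,2R)v(x,R,2R). -/
def ER : Prop := ∃ C > (1:ℝ), ∀ (x : Γ) (R : ℕ), 0 < R →
  G.meanE x (2*(R:ℝ)) ≤ C * (G.resA x (R:ℝ) (2*(R:ℝ)) * G.volA x (R:ℝ) (2*(R:ℝ))) ∧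
  G.resA x (R:ℝ) (2*(R:ℝ)) * G.volA x (R:ℝ) (2*(R:ℝ)) ≤ C * G.meanE x (2*(R:ℝ))

/-- (aDρv): anti-doubling for the resistance-volume product. -/
def aDrv : Prop := ∃ c > (0:ℝ), ∃ b > (0:ℝ), ∀ (x : Γ) (r R : ℕ), 0 < r → r < R →
  c * ((R:ℝ)/(r:ℝ)) ^ b * (G.resA x (r:ℝ) (2*(r:ℝ)) * G.volA x (r:ℝ) (2*(r:ℝ)))
    ≤ G.resA x (R:ℝ) (2*(R:ℝ)) * G.volA x (R:ℝ) (2*(R:ℝ))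

/-- RLE(E): resistance lower estimate w.r.t. the mean exit time. -/
def RLE_E : Prop := ∃ c > (0:ℝ), ∀ (x : Γ) (R : ℕ), 0 < R →
  c * G.meanE x (2*(R:ℝ)) / G.vol x (2*(R:ℝ)) ≤ G.resA x (R:ℝ) (2*(R:ℝ))

/-- the two-sided regularity (w1) of a space-time scaling function,
with exponents β (upper) and β' (lower). -/
def W0reg (F : Γ → ℕ → ℝ) (β β' : ℝ) : Prop :=
  ∃ cF > (0:ℝ), ∃ CF > (0:ℝ), ∀ (x y : Γ) (R r : ℕ), 0 < r → r < R → G.dist x y < R →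
    cF * ((R:ℝ)/(r:ℝ)) ^ β' ≤ F x R / F y r ∧ F x R / F y r ≤ CF * ((R:ℝ)/(r:ℝ)) ^ β

/-- F ∈ W₀. -/
def memW0 (F : Γ → ℕ → ℝ) : Prop :=
  (∃ β > (1:ℝ), ∃ β' > (0:ℝ), G.W0reg F β β') ∧
  (∃ c > (0:ℝ), ∀ (x : Γ) (R : ℕ), c * (R:ℝ)^2 ≤ F x R) ∧
  (∀ (x : Γ) (R : ℕ), F x R + 1 ≤ F x (R+1))

/-- F ∈ W₁ (β' > 1). -/
def memW1 (F : Γ → ℕ → ℝ) : Prop :=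
  (∃ β > (1:ℝ), ∃ β' > (1:ℝ), G.W0reg F β β') ∧
  (∃ c > (0:ℝ), ∀ (x : Γ) (R : ℕ), c * (R:ℝ)^2 ≤ F x R) ∧
  (∀ (x : Γ) (R : ℕ), F x R + 1 ≤ F x (R+1))

/-- generalized inverse f(x,n) = min{R ∈ ℕ : F(x,R) ≥ n}. -/
def invF' (F : Γ → ℕ → ℝ) (x : Γ) (n : ℕ) : ℕ := sInf {R : ℕ | (n:ℝ) ≤ F x R}

/-- g(F): two-sided bound for the Green kernel on annuli. -/
def gF (F : Γ → ℕ → ℝ) : Prop :=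
  ∃ c > (0:ℝ), ∃ C > (0:ℝ), ∀ (x : Γ) (R : ℕ), 0 < R → ∀ y : Γ,
    y ∈ G.ball x (R:ℝ) → y ∉ G.ball x ((R:ℝ)/2) →
      G.greenK (G.ball x (2*(R:ℝ))) x y ≤ C * F x (2*R) / G.vol x (2*(R:ℝ)) ∧
      c * F x (2*R) / G.vol x (2*(R:ℝ)) ≤ G.greenK (G.ball x (2*(R:ℝ))) x y

/-- DUE(F): diagonal upper estimate. -/
def DUE (F : Γ → ℕ → ℝ) : Prop :=
  ∃ C > (0:ℝ), ∀ (x : Γ) (n : ℕ), 0 < n → G.hk n x x ≤ C / G.vol x (invF' F x n : ℝ)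

/-- UE(F): (sub-Gaussian) heat kernel upper estimate. -/
def UE (F : Γ → ℕ → ℝ) : Prop :=
  ∃ C > (1:ℝ), ∃ β > (1:ℝ), ∃ c > (0:ℝ), ∀ (x y : Γ) (n : ℕ), 0 < n →
    G.hk n x y ≤ C / G.vol x (invF' F x n : ℝ) *
      Real.exp (-(c * (F x (G.dist x y) / n) ^ (1/(β-1))))

/-- PLE(F): particular lower estimate for the Dirichlet heat kernel. -/
def PLE (F : Γ → ℕ → ℝ) : Prop :=
  ∃ c δ ε : ℝ, 0 < c ∧ c < 1 ∧ 0 < δ ∧ δ < 1 ∧ 0 < ε ∧ ε < 1 ∧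
    ∀ (x : Γ) (R : ℕ), 0 < R → ∀ (n : ℕ) (y : Γ),
      (n:ℝ) ≤ ε * F x R →
      (G.dist x y : ℝ) < min (n:ℝ) (δ * (invF' F x n : ℝ)) →
        c / G.vol x (invF' F x n : ℝ) ≤ G.hktA (G.ball x (R:ℝ)) n x y

/-- NDLE(F): near diagonal lower estimate. -/
def NDLE (F : Γ → ℕ → ℝ) : Prop :=
  ∃ c > (0:ℝ), ∃ δ > (0:ℝ), ∀ (x y : Γ) (n : ℕ), 0 < n →
    (G.dist x y : ℝ) < min (δ * (invF' F x n : ℝ)) (n:ℝ) →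
      c / G.vol x (invF' F x n : ℝ) ≤ G.hkt n x y

/-- LE(F): off-diagonal lower estimate. -/
def LE (F : Γ → ℕ → ℝ) : Prop :=
  ∃ C > (1:ℝ), ∃ β' > (1:ℝ), ∃ c > (0:ℝ), ∀ (x y : Γ) (n : ℕ), G.dist x y ≤ n →
    c / G.vol x (invF' F x n : ℝ) *
        Real.exp (-(C * (F x (G.dist x y) / n) ^ (1/(β'-1))))
      ≤ G.hkt n x y

/-- u is a nonnegative Dirichlet sub-solution of the heat equation
on [0,T] × B. -/
def subSolOn (B : Set Γ) (T : ℝ) (u : ℕ → Γ → ℝ) : Prop :=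
  (∀ n y, 0 ≤ u n y) ∧
  ∀ (n : ℕ) (y : Γ), y ∈ B → (n:ℝ) < T → u (n+1) y - u n y ≤ G.lapB B (u n) y

/-- u is a nonnegative Dirichlet super-solution of the heat equation
on [0,T] × B. -/
def supSolOn (B : Set Γ) (T : ℝ) (u : ℕ → Γ → ℝ) : Prop :=
  (∀ n y, 0 ≤ u n y) ∧
  ∀ (n : ℕ) (y : Γ), y ∈ B → (n:ℝ) < T → G.lapB B (u n) y ≤ u (n+1) y - u n y

/-- PMV_δ(F) with constants c1 < c2 < c3 < c4 ≤ c5: parabolic mean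
value inequality. -/
def PMVd (F : Γ → ℕ → ℝ) (δ c1 c2 c3 c4 c5 : ℝ) : Prop :=
  ∃ C > (1:ℝ), ∀ (x : Γ) (R : ℕ), 0 < R →
    ∀ u : ℕ → Γ → ℝ, G.subSolOn (G.ball x (R:ℝ)) (c5 * F x R) u →
      ∀ (n : ℕ) (y : Γ), y ∈ G.ball x (δ * R) →
        c3 * F x R ≤ (n:ℝ) → (n:ℝ) ≤ c4 * F x R →
          u n y ≤ C / ((c2 - c1) * F x R * G.vol x (δ * R)) *
            G.stsum (G.ball x (δ * R)) (c1 * F x R) (c2 * F x R) u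

/-- PMV(F) = PMV_1(F) for all admissible constants. -/
def PMV (F : Γ → ℕ → ℝ) : Prop :=
  ∀ c1 c2 c3 c4 c5 : ℝ, 0 ≤ c1 → c1 < c2 → c2 < c3 → c3 < c4 → c4 ≤ c5 →
    G.PMVd F 1 c1 c2 c3 c4 c5

/-- PSMV(F): parabolic super mean value inequality. -/
def PSMV (F : Γ → ℕ → ℝ) : Prop :=
  ∃ ε : ℝ, 0 < ε ∧ ε < 1 ∧
    ∀ c1 c2 c3 c4 c5 : ℝ, 0 < c1 → c1 < c2 → c2 < c3 → c3 < c4 → c4 ≤ c5 →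
      c4 - c1 < ε →
      ∃ δ > (0:ℝ), ∃ c > (0:ℝ), ∀ (x : Γ) (R : ℕ), 0 < R →
        ∀ u : ℕ → Γ → ℝ, G.supSolOn (G.ball x (R:ℝ)) (c5 * F x R) u →
          ∀ (k : ℕ) (y : Γ), y ∈ G.ball x (δ * R) →
            c3 * F x R ≤ (k:ℝ) → (k:ℝ) ≤ c4 * F x R →
              c / ((c2 - c1) * F x R * G.vol x (δ * R)) *
                  G.stsum (G.ball x (δ * R)) (c1 * F x R) (c2 * F x R)
                    (fun i z => u i z + u (i+1) z)
                ≤ u k y + u (k+1) y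

/-- u solves the heat equation ∂ₙu = Δu on [a,b) × B. -/
def solOn (B : Set Γ) (a b : ℝ) (u : ℕ → Γ → ℝ) : Prop :=
  (∀ n y, 0 ≤ u n y) ∧
  ∀ (n : ℕ) (y : Γ), y ∈ B → a ≤ (n:ℝ) → (n:ℝ) < b → u (n+1) y = G.Pop (u n) y

/-- PH(F): parabolic Harnack inequality. -/
def PH (F : Γ → ℕ → ℝ) : Prop :=
  ∃ C > (0:ℝ), ∀ (x : Γ) (R k : ℕ), 0 < R →
    ∀ u : ℕ → Γ → ℝ, G.solOn (G.ball x (2*(R:ℝ))) (k:ℝ) ((k:ℝ) + F x R) u →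
      ∀ (nm np : ℕ) (xm xp : Γ), xm ∈ G.ball x (R:ℝ) → xp ∈ G.ball x (R:ℝ) →
        (k:ℝ) + F x R / 4 ≤ (nm:ℝ) → (nm:ℝ) ≤ (k:ℝ) + F x R / 2 →
        (k:ℝ) + 3 * F x R / 4 ≤ (np:ℝ) → (np:ℝ) < (k:ℝ) + F x R →
        (G.dist xm xp : ℝ) ≤ (np:ℝ) - (nm:ℝ) →
          u nm xm ≤ C * (u np xp + u (np+1) xp)

/-- (MV): elliptic mean value inequality. -/
def MV : Prop := ∃ C > (0:ℝ), ∀ (x : Γ) (R : ℕ), 0 < R →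
  ∀ u : Γ → ℝ, (∀ y, 0 ≤ u y) → G.harmOn u (G.ball x (R:ℝ)) →
    u x ≤ C / G.vol x (R:ℝ) * G.wsum (G.ball x (R:ℝ)) u

/-- the set of integers k eligible in the definition of the local
sub-Gaussian upper exponent k_x(n,R). -/
def kSet (F : Γ → ℕ → ℝ) (q : ℝ) (x : Γ) (n R : ℕ) : Set ℕ :=
  {k | 1 ≤ k ∧ ∀ y : Γ, G.dist x y < R → (n:ℝ)/(k:ℝ) ≤ q * F y (R / k)}

/-- k = k_x(n,R): the maximal eligible integer, or 1 if there is none. -/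
def isKexp (F : Γ → ℕ → ℝ) (q : ℝ) (x : Γ) (n R k : ℕ) : Prop :=
  (k ∈ G.kSet F q x n R ∧ ∀ j ∈ G.kSet F q x n R, j ≤ k) ∨
  (G.kSet F q x n R = ∅ ∧ k = 1)

/-- the set of integers l eligible in the definition of l_x(n,R). -/
def lSet' (F : Γ → ℕ → ℝ) (Cl : ℝ) (x : Γ) (n R : ℕ) : Set ℕ :=
  {l | 1 ≤ l ∧ l ≤ n ∧ Cl * F x ((R + l - 1) / l) ≤ (n:ℝ)/(l:ℝ)}

/-- l = l_x(n,R): the minimal eligible integer, or n if there is none. -/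
def isLexp (F : Γ → ℕ → ℝ) (Cl : ℝ) (x : Γ) (n R l : ℕ) : Prop :=
  (l ∈ lSet' F Cl x n R ∧ ∀ j ∈ lSet' F Cl x n R, l ≤ j) ∨
  (lSet' F Cl x n R = ∅ ∧ l = n)

end WGraph

/-!
Let `s_n(x) = P_x(T_B > n)` be the survival probability of the walk in `B = B(x, R)`, so that
`E(x, R) = ∑ₙ s_n(x)`. Summing PLE(F) over `y ∈ B(x, δ f(x, n))` and comparing
`V(x, f(x, n))` with `V(x, δ f(x, n))` by (VD) gives `s_n(x) ≥ a > 0` for all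
`F(x, 0) < n ≤ ε F(x, R)`. By (p0), from every point of `B` the walk leaves `B` within `2R`
steps with probability at least `p₀ ^ (2R)`, so `s_n` decays geometrically at a rate depending
only on `R`; at a fixed radius `R₀` this forces `F(x, 1)` to be bounded uniformly in `x`.
Hence about `ε F(x, R)` terms of the series are at least `a`, and `E(x, R) ≥ s_0(x) = 1`
covers bounded `F(x, R)`.
-/

lemma summable_pow_div {θ : ℝ} (h0 : 0 < θ) (h1 : θ < 1) {L : ℕ} (hL : 0 < L) :
    Summable fun n : ℕ => θ ^ (n / L) := by
  set ρ := θ ^ ((L : ℝ)⁻¹)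
  have hρL : ρ ^ L = θ := Real.rpow_inv_natCast_pow h0.le hL.ne'
  have hρ0 : 0 ≤ ρ := by positivity
  have hρ1 : ρ < 1 := Real.rpow_lt_one h0.le h1 (by positivity)
  refine ((summable_geometric_of_lt_one hρ0 hρ1).div_const θ).of_nonneg_of_le
    (fun n => by positivity) fun n => ?_
  rw [le_div_iff₀ h0, ← pow_succ, ← hρL, ← pow_mul]
  exact pow_le_pow_of_le_one hρ0 hρ1.le (Nat.lt_mul_div_succ n hL).le

lemma add_natCast_le_of_add_one_le {f : ℕ → ℝ} (h : ∀ R, f R + 1 ≤ f (R + 1)) (R : ℕ) :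
    f 0 + R ≤ f R := by
  induction R with
  | zero => simp
  | succ R ih => push_cast; linarith [h R]

lemma mul_sub_le_of_hasSum {s : ℕ → ℝ} {a T E : ℝ} {M : ℕ} (ha : 0 ≤ a) (hs0 : ∀ n, 0 ≤ s n)
    (hE : HasSum s E) (hs : ∀ n : ℕ, M ≤ n → (n : ℝ) ≤ T → a ≤ s n) : a * (T - M) ≤ E := by
  rcases lt_or_ge T M with hTM | hMT
  · exact (mul_nonpos_of_nonneg_of_nonpos ha (by linarith)).trans (hE.nonneg hs0)
  have hcount : T - M ≤ ((Finset.Icc M ⌊T⌋₊).card : ℝ) := by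
    have hM : M ≤ ⌊T⌋₊ := Nat.le_floor hMT
    rw [Nat.card_Icc, Nat.cast_sub (by omega)]
    push_cast
    linarith [Nat.lt_floor_add_one T]
  calc a * (T - M) ≤ (Finset.Icc M ⌊T⌋₊).card • a := by
        rw [nsmul_eq_mul, mul_comm]; exact mul_le_mul_of_nonneg_right hcount ha
    _ ≤ ∑ n ∈ Finset.Icc M ⌊T⌋₊, s n := Finset.card_nsmul_le_sum _ _ _ fun n hn => by
        rw [Finset.mem_Icc] at hn
        exact hs n hn.1 ((Nat.cast_le.2 hn.2).trans (Nat.floor_le (by linarith)))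
    _ ≤ E := sum_le_hasSum _ (fun n _ => hs0 n) hE

namespace WGraph

variable {Γ : Type*} {G : WGraph Γ} {F : Γ → ℕ → ℝ}

section Distance

lemma adjN_add {a b : ℕ} {x y z : Γ} (hxy : G.adjN a x y) (hyz : G.adjN b y z) :
    G.adjN (a + b) x z := by
  induction a generalizing x with
  | zero => rwa [zero_add, show x = y from hxy]
  | succ a ih =>
    obtain ⟨w, hxw, hwy⟩ := hxy
    rw [Nat.add_right_comm]
    exact ⟨w, hxw, ih hwy⟩

lemma exists_adjN_of_adjN_add {a b : ℕ} {x z : Γ} (h : G.adjN (a + b) x z) :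
    ∃ y, G.adjN a x y ∧ G.adjN b y z := by
  induction a generalizing x with
  | zero => exact ⟨x, rfl, by rwa [zero_add] at h⟩
  | succ a ih =>
    rw [Nat.add_right_comm] at h
    obtain ⟨w, hxw, hwz⟩ := h
    obtain ⟨y, hwy, hyz⟩ := ih hwz
    exact ⟨y, ⟨w, hxw, hwy⟩, hyz⟩

lemma adjN_symm {n : ℕ} {x y : Γ} (h : G.adjN n x y) : G.adjN n y x := by
  induction n generalizing x with
  | zero => exact (show x = y from h).symm
  | succ n ih =>
    obtain ⟨w, hxw, hwy⟩ := h
    exact adjN_add (ih hwy) ⟨x, G.adj_symm x w hxw, rfl⟩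

lemma adjN_dist (G : WGraph Γ) (x y : Γ) : G.adjN (G.dist x y) x y := by
  refine Nat.sInf_mem (s := {n | G.adjN n x y}) ?_
  have hxy := G.connected x y
  induction hxy with
  | refl => exact ⟨0, rfl⟩
  | tail _ hyz ih =>
    obtain ⟨n, hn⟩ := ih
    exact ⟨n + 1, adjN_add hn ⟨_, hyz, rfl⟩⟩

lemma dist_le_of_adjN {n : ℕ} {x y : Γ} (h : G.adjN n x y) : G.dist x y ≤ n :=
  Nat.sInf_le h

@[simp] lemma dist_self (x : Γ) : G.dist x x = 0 :=
  Nat.le_zero.mp (dist_le_of_adjN rfl)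

lemma dist_comm (x y : Γ) : G.dist x y = G.dist y x :=
  le_antisymm (dist_le_of_adjN (adjN_symm (G.adjN_dist y x)))
    (dist_le_of_adjN (adjN_symm (G.adjN_dist x y)))

lemma dist_triangle (x y z : Γ) : G.dist x z ≤ G.dist x y + G.dist y z :=
  dist_le_of_adjN (adjN_add (G.adjN_dist x y) (G.adjN_dist y z))

lemma mem_ball_self (x : Γ) {r : ℝ} (hr : 0 < r) : x ∈ G.ball x r := by
  simpa [ball] using hr

end Distance

section MarkovKernel

lemma w_nonneg (x y : Γ) : 0 ≤ G.w x y := by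
  by_cases h : G.adj x y
  · exact (G.w_pos x y h).le
  · exact (G.w_zero x y h).ge

lemma vtx_nonneg (x : Γ) : 0 ≤ G.vtx x :=
  tsum_nonneg (G.w_nonneg x)

lemma kerP_nonneg (x y : Γ) : 0 ≤ G.kerP x y :=
  div_nonneg (G.w_nonneg x y) (G.vtx_nonneg x)

lemma exists_adj (x : Γ) : ∃ y, G.adj x y := by
  have := G.inf
  obtain ⟨y, hyx⟩ := exists_ne x
  have hxy := G.connected x y
  induction hxy with
  | refl => exact absurd rfl hyx
  | @tail z _ _ hzy ih =>
    by_cases hzx : z = x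
    · exact ⟨_, hzx ▸ hzy⟩
    · exact ih hzx

variable (hp0 : G.p0cond)
include hp0

lemma vtx_pos (x : Γ) : 0 < G.vtx x := by
  obtain ⟨p, hp, hker⟩ := hp0
  obtain ⟨y, hxy⟩ := G.exists_adj x
  refine (G.vtx_nonneg x).lt_of_ne fun h => ?_
  have := hker x y hxy
  rw [kerP, ← h, div_zero] at this
  exact this.not_gt hp

lemma summable_kerP (x : Γ) : Summable (G.kerP x) := by
  refine Summable.div_const ?_ _
  by_contra h
  exact (vtx_pos hp0 x).ne' (tsum_eq_zero_of_not_summable h)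

lemma tsum_kerP (x : Γ) : ∑' y, G.kerP x y = 1 := by
  simp only [kerP]
  rw [tsum_div_const]
  exact div_self (vtx_pos hp0 x).ne'

lemma kerP_le_one (x y : Γ) : G.kerP x y ≤ 1 :=
  tsum_kerP hp0 x ▸ (summable_kerP hp0 x).le_tsum y fun z _ => G.kerP_nonneg x z

lemma finite_setOf_adj (x : Γ) : {y | G.adj x y}.Finite := by
  obtain ⟨p, hp, hker⟩ := hp0
  have hsmall : ∀ᶠ y in Filter.cofinite, G.kerP x y < p :=
    (summable_kerP ⟨p, hp, hker⟩ x).tendsto_cofinite_zero.eventually_lt_const hp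
  exact hsmall.subset fun y hxy => (hker x y hxy).not_gt

end MarkovKernel

section MarkovOperator

lemma Pop_const_mul (a : ℝ) (u : Γ → ℝ) (x : Γ) :
    G.Pop (fun y => a * u y) x = a * G.Pop u x := by
  rw [Pop, Pop, ← tsum_mul_left]
  congr 1 with y
  ring

variable (hp0 : G.p0cond) {u v : Γ → ℝ}
include hp0

lemma summable_kerP_mul (hu0 : ∀ y, 0 ≤ u y) (hu1 : ∀ y, u y ≤ 1) (x : Γ) :
    Summable fun y => G.kerP x y * u y :=
  (summable_kerP hp0 x).of_nonneg_of_le (fun y => mul_nonneg (G.kerP_nonneg x y) (hu0 y))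
    fun y => mul_le_of_le_one_right (G.kerP_nonneg x y) (hu1 y)

lemma Pop_mono (hu0 : ∀ y, 0 ≤ u y) (huv : ∀ y, u y ≤ v y) (hv1 : ∀ y, v y ≤ 1) (x : Γ) :
    G.Pop u x ≤ G.Pop v x :=
  Summable.tsum_le_tsum (fun y => mul_le_mul_of_nonneg_left (huv y) (G.kerP_nonneg x y))
    (summable_kerP_mul hp0 hu0 (fun y => (huv y).trans (hv1 y)) x)
    (summable_kerP_mul hp0 (fun y => (hu0 y).trans (huv y)) hv1 x)

lemma Pop_le_one_sub (hu0 : ∀ y, 0 ≤ u y) (hu1 : ∀ y, u y ≤ 1) (x z : Γ) :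
    G.Pop u x ≤ 1 - G.kerP x z * (1 - u z) := by
  have hsum : Summable fun y => G.kerP x y * (1 - u y) :=
    summable_kerP_mul hp0 (fun y => sub_nonneg.2 (hu1 y)) (fun y => by linarith [hu0 y]) x
  have hsplit : G.Pop u x + ∑' y, G.kerP x y * (1 - u y) = 1 := by
    rw [Pop, ← (summable_kerP_mul hp0 hu0 hu1 x).tsum_add hsum]
    conv_rhs => rw [← tsum_kerP hp0 x]
    congr 1 with y
    ring
  have hz : G.kerP x z * (1 - u z) ≤ ∑' y, G.kerP x y * (1 - u y) :=
    hsum.le_tsum z fun y _ => mul_nonneg (G.kerP_nonneg x y) (sub_nonneg.2 (hu1 y))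
  linarith

lemma Pop_le_one (hu0 : ∀ y, 0 ≤ u y) (hu1 : ∀ y, u y ≤ 1) (x : Γ) : G.Pop u x ≤ 1 :=
  (Pop_le_one_sub hp0 hu0 hu1 x x).trans
    (sub_le_self _ (mul_nonneg (G.kerP_nonneg x x) (sub_nonneg.2 (hu1 x))))

end MarkovOperator

section Survival

/-- `G.survival A n x = P_x(T_A > n)`: the probability that the walk from `x` stays in `A`
during its first `n` steps. -/
def survival (A : Finset Γ) (n : ℕ) (x : Γ) : ℝ := ∑ y ∈ A, G.killedP A n x y

lemma killedP_nonneg (A : Set Γ) (n : ℕ) (x y : Γ) : 0 ≤ G.killedP A n x y := by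
  induction n generalizing x with
  | zero => simp only [killedP]; split_ifs <;> norm_num
  | succ n ih =>
    simp only [killedP]
    split_ifs
    · exact tsum_nonneg fun z => mul_nonneg (G.kerP_nonneg x z) (ih z)
    · rfl

lemma killedP_of_notMem {A : Set Γ} (n : ℕ) {x : Γ} (hx : x ∉ A) (y : Γ) :
    G.killedP A n x y = 0 := by
  cases n <;> simp [killedP, hx]

variable {A : Finset Γ} {x : Γ}

lemma survival_nonneg (n : ℕ) (x : Γ) : 0 ≤ G.survival A n x :=
  Finset.sum_nonneg fun y _ => G.killedP_nonneg A n x y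

lemma survival_of_notMem (hx : x ∉ A) (n : ℕ) : G.survival A n x = 0 :=
  Finset.sum_eq_zero fun y _ => G.killedP_of_notMem n (Finset.mem_coe.not.2 hx) y

lemma survival_zero (hx : x ∈ A) : G.survival A 0 x = 1 := by
  simp [survival, killedP, hx]

lemma survival_succ (hx : x ∈ A) (n : ℕ) :
    G.survival A (n + 1) x = G.Pop (G.survival A n) x := by
  have hA : ∀ y, ∑' z, G.kerP x z * G.killedP A n z y =
      ∑ z ∈ A, G.kerP x z * G.killedP A n z y := fun y =>
    tsum_eq_sum fun z hz => by rw [G.killedP_of_notMem n (Finset.mem_coe.not.2 hz), mul_zero]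
  rw [Pop, tsum_eq_sum fun z hz => by rw [survival_of_notMem hz, mul_zero]]
  simp only [survival, killedP, Finset.mem_coe, if_pos hx, hA, Finset.mul_sum]
  exact Finset.sum_comm

variable (hp0 : G.p0cond)
include hp0

lemma survival_le_one (n : ℕ) (x : Γ) : G.survival A n x ≤ 1 := by
  induction n generalizing x with
  | zero =>
    by_cases hx : x ∈ A
    · rw [survival_zero hx]
    · rw [survival_of_notMem hx]; exact zero_le_one
  | succ n ih =>
    by_cases hx : x ∈ A
    · rw [survival_succ hx]; exact Pop_le_one hp0 (survival_nonneg n) ih x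
    · rw [survival_of_notMem hx]; exact zero_le_one

lemma survival_succ_le (n : ℕ) (x : Γ) : G.survival A (n + 1) x ≤ G.survival A n x := by
  induction n generalizing x with
  | zero =>
    by_cases hx : x ∈ A
    · rw [survival_succ hx, survival_zero hx]
      exact Pop_le_one hp0 (survival_nonneg 0) (survival_le_one hp0 0) x
    · rw [survival_of_notMem hx, survival_of_notMem hx]
  | succ n ih =>
    by_cases hx : x ∈ A
    · rw [survival_succ hx, survival_succ hx]
      exact Pop_mono hp0 (survival_nonneg _) ih (survival_le_one hp0 n) x
    · rw [survival_of_notMem hx, survival_of_notMem hx]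

omit hp0 in
lemma survival_le_of_adjN {p : ℝ} (hp : 0 < p) (hker : ∀ x y, G.adj x y → p ≤ G.kerP x y)
    {k : ℕ} {y z : Γ} (hyz : G.adjN k y z) (hz : z ∉ A) : G.survival A k y ≤ 1 - p ^ k := by
  have hp0 : G.p0cond := ⟨p, hp, hker⟩
  induction k generalizing y with
  | zero =>
    rw [show y = z from hyz, survival_of_notMem hz]
    simp
  | succ k ih =>
    obtain ⟨w, hyw, hwz⟩ := hyz
    by_cases hy : y ∈ A
    · have hexit : p * p ^ k ≤ G.kerP y w * (1 - G.survival A k w) :=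
        mul_le_mul (hker y w hyw) (by linarith [ih hwz]) (by positivity) (G.kerP_nonneg y w)
      rw [survival_succ hy, pow_succ']
      linarith [Pop_le_one_sub hp0 (u := G.survival A k) (survival_nonneg k)
        (survival_le_one hp0 k) y w]
    · rw [survival_of_notMem hy, sub_nonneg]
      exact pow_le_one₀ hp.le ((hker y w hyw).trans (kerP_le_one hp0 y w))

end Survival

section Decay

variable {p : ℝ} {A : Finset Γ} {L : ℕ}

lemma survival_add_le (hp : 0 < p) (hker : ∀ x y, G.adj x y → p ≤ G.kerP x y)
    (hexit : ∀ y ∈ A, ∃ z, G.adjN L y z ∧ z ∉ A) (n : ℕ) (x : Γ) :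
    G.survival A (n + L) x ≤ (1 - p ^ L) * G.survival A n x := by
  have hp0 : G.p0cond := ⟨p, hp, hker⟩
  have hθ : 1 - p ^ L ≤ 1 := sub_le_self _ (by positivity)
  induction n generalizing x with
  | zero =>
    by_cases hx : x ∈ A
    · obtain ⟨z, hxz, hz⟩ := hexit x hx
      rw [zero_add, survival_zero hx, mul_one]
      exact survival_le_of_adjN hp hker hxz hz
    · rw [survival_of_notMem hx, survival_of_notMem hx, mul_zero]
  | succ n ih =>
    by_cases hx : x ∈ A
    · rw [Nat.add_right_comm, survival_succ hx, survival_succ hx, ← Pop_const_mul]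
      exact Pop_mono hp0 (survival_nonneg _) ih
        (fun y => (mul_le_of_le_one_left (survival_nonneg n y) hθ).trans
          (survival_le_one hp0 n y)) x
    · rw [survival_of_notMem hx, survival_of_notMem hx, mul_zero]

lemma survival_le_pow_div (hp : 0 < p) (hp1 : p < 1)
    (hker : ∀ x y, G.adj x y → p ≤ G.kerP x y)
    (hexit : ∀ y ∈ A, ∃ z, G.adjN L y z ∧ z ∉ A) (n : ℕ) (x : Γ) :
    G.survival A n x ≤ (1 - p ^ L) ^ (n / L) := by
  have hθ : 0 ≤ 1 - p ^ L := sub_nonneg.2 (pow_le_one₀ hp.le hp1.le)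
  have hblocks : ∀ q r, G.survival A (r + q * L) x ≤ (1 - p ^ L) ^ q * G.survival A r x := by
    intro q
    induction q with
    | zero => simp
    | succ q ih =>
      intro r
      rw [Nat.succ_mul, ← add_assoc, pow_succ', mul_assoc]
      exact (survival_add_le hp hker hexit _ x).trans (mul_le_mul_of_nonneg_left (ih r) hθ)
  have := hblocks (n / L) (n % L)
  rw [Nat.mod_add_div'] at this
  exact this.trans (mul_le_of_le_one_right (by positivity) (survival_le_one ⟨p, hp, hker⟩ _ x))

lemma hasSum_survival {θ : ℝ} (hθ0 : 0 < θ) (hθ1 : θ < 1) (hL : 0 < L) {x : Γ}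
    (hs : ∀ n, G.survival A n x ≤ θ ^ (n / L)) :
    HasSum (fun n => G.survival A n x) (G.exitE A x) := by
  rw [exitE, Finset.tsum_subtype' A (G.greenF A x)]
  refine hasSum_sum fun y hy => Summable.hasSum ?_
  refine (summable_pow_div hθ0 hθ1 hL).of_nonneg_of_le (fun n => G.killedP_nonneg A n x y)
    fun n => (Finset.single_le_sum (fun z _ => G.killedP_nonneg A n x z) hy).trans (hs n)

end Decay

section Balls

variable (hp0 : G.p0cond)
include hp0

lemma finite_setOf_adjN (n : ℕ) (x : Γ) : {y | G.adjN n x y}.Finite := by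
  induction n generalizing x with
  | zero => exact (Set.finite_singleton x).subset fun y (hxy : x = y) => hxy.symm
  | succ n ih =>
    refine ((finite_setOf_adj hp0 x).biUnion fun z _ => ih z).subset ?_
    rintro y ⟨z, hxz, hzy⟩
    exact Set.mem_biUnion hxz hzy

lemma ball_finite (x : Γ) (r : ℝ) : (G.ball x r).Finite := by
  refine ((Finset.range ⌈r⌉₊).finite_toSet.biUnion fun m _ => finite_setOf_adjN hp0 m x).subset ?_
  intro y (hy : (G.dist x y : ℝ) < r)
  exact Set.mem_biUnion (Finset.mem_coe.2 (Finset.mem_range.2 (Nat.cast_lt.1 (hy.trans_le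
    (Nat.le_ceil r))))) (G.adjN_dist x y)

lemma exists_dist_eq (x : Γ) (m : ℕ) : ∃ z, G.dist x z = m := by
  have := G.inf
  obtain ⟨w, hw⟩ := (ball_finite hp0 x m).exists_notMem
  have hmw : m ≤ G.dist x w := by simpa [ball] using hw
  obtain ⟨z, hxz, hzw⟩ := exists_adjN_of_adjN_add
    (show G.adjN (m + (G.dist x w - m)) x w by rw [Nat.add_sub_cancel' hmw]; exact G.adjN_dist x w)
  refine ⟨z, le_antisymm (dist_le_of_adjN hxz) ?_⟩
  have := (G.dist_triangle x z w).trans (Nat.add_le_add_left (dist_le_of_adjN hzw) _)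
  omega

lemma exists_adjN_notMem_ball {x y : Γ} {R : ℕ} (hy : y ∈ G.ball x R) :
    ∃ z, G.adjN (2 * R) y z ∧ z ∉ G.ball x R := by
  obtain ⟨z, hz⟩ := exists_dist_eq hp0 y (2 * R)
  refine ⟨z, hz ▸ G.adjN_dist y z, fun hzx => ?_⟩
  have hxy : G.dist x y < R := by simpa [ball] using hy
  have hxz : G.dist x z < R := by simpa [ball] using hzx
  have := G.dist_triangle y x z
  rw [dist_comm y x] at this
  omega

omit hp0 in
lemma setVol_coe (A : Finset Γ) : G.setVol A = ∑ y ∈ A, G.vtx y :=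
  Finset.tsum_subtype' A G.vtx

lemma vol_eq_sum (x : Γ) (r : ℝ) : G.vol x r = ∑ y ∈ (ball_finite hp0 x r).toFinset, G.vtx y := by
  rw [vol, ← setVol_coe, Set.Finite.coe_toFinset]

lemma vol_mono (x : Γ) {r r' : ℝ} (h : r ≤ r') : G.vol x r ≤ G.vol x r' := by
  rw [vol_eq_sum hp0, vol_eq_sum hp0]
  refine Finset.sum_le_sum_of_subset_of_nonneg ?_ fun y _ _ => G.vtx_nonneg y
  exact Set.Finite.toFinset_subset_toFinset.2 fun y (hy : (G.dist x y : ℝ) < r) => hy.trans_le h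

lemma vol_pos (x : Γ) {r : ℝ} (hr : 0 < r) : 0 < G.vol x r := by
  rw [vol_eq_sum hp0]
  exact (vtx_pos hp0 x).trans_le (Finset.single_le_sum (fun y _ => G.vtx_nonneg y)
    ((Set.Finite.mem_toFinset _).2 (G.mem_ball_self x hr)))

omit hp0 in
lemma vol_two_pow_mul_le {D : ℝ} (hD0 : 0 ≤ D)
    (hD : ∀ (x : Γ) (R : ℝ), 0 < R → G.vol x (2 * R) ≤ D * G.vol x R)
    (x : Γ) {r : ℝ} (hr : 0 < r) (k : ℕ) : G.vol x (2 ^ k * r) ≤ D ^ k * G.vol x r := by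
  induction k with
  | zero => simp
  | succ k ih =>
    rw [pow_succ', mul_assoc, pow_succ', mul_assoc]
    exact (hD x _ (by positivity)).trans (mul_le_mul_of_nonneg_left ih hD0)

end Balls

section ScaleFunction

lemma memW0.zero_le (hF : G.memW0 F) (x : Γ) : 0 ≤ F x 0 := by
  obtain ⟨-, ⟨c, -, hc⟩, -⟩ := hF
  simpa using hc x 0

lemma memW0.natCast_le (hF : G.memW0 F) (x : Γ) (R : ℕ) : (R : ℝ) ≤ F x R := by
  linarith [hF.zero_le x, add_natCast_le_of_add_one_le (hF.2.2 x) R]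

lemma invF'_le_of_le {x : Γ} {n R : ℕ} (h : (n : ℝ) ≤ F x R) : invF' F x n ≤ R :=
  Nat.sInf_le h

lemma memW0.invF'_le_self (hF : G.memW0 F) (x : Γ) (n : ℕ) : invF' F x n ≤ n :=
  invF'_le_of_le (hF.natCast_le x n)

/-- `invF'` is an `sInf` whose junk value `0` on the empty set is excluded by `n ≤ F x n`. -/
lemma memW0.one_le_invF' (hF : G.memW0 F) {x : Γ} {n : ℕ} (hn : F x 0 < n) :
    1 ≤ invF' F x n := by
  refine Nat.one_le_iff_ne_zero.2 fun h0 => ?_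
  rcases Nat.sInf_eq_zero.1 h0 with h | h
  · exact (show (n : ℝ) ≤ F x 0 from h).not_gt hn
  · exact (Set.eq_empty_iff_forall_notMem.1 h n) (hF.natCast_le x n)

end ScaleFunction

section ExitTime

variable (hp0 : G.p0cond)
include hp0

lemma mul_vol_le_survival {A : Finset Γ} {x : Γ} {n : ℕ} {r a : ℝ} (hrA : G.ball x r ⊆ A)
    (h : ∀ y ∈ G.ball x r, a ≤ G.hktA A n x y) :
    a * G.vol x r ≤ G.survival A n x + G.survival A (n + 1) x := by
  have hBA : (ball_finite hp0 x r).toFinset ⊆ A := fun y hy =>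
    Finset.mem_coe.1 (hrA ((Set.Finite.mem_toFinset _).1 hy))
  rw [vol_eq_sum hp0, Finset.mul_sum, survival, survival, ← Finset.sum_add_distrib]
  refine (Finset.sum_le_sum fun y hy => ?_).trans (Finset.sum_le_sum_of_subset_of_nonneg hBA
    fun y _ _ => add_nonneg (G.killedP_nonneg _ _ x y) (G.killedP_nonneg _ _ x y))
  have := h y ((Set.Finite.mem_toFinset _).1 hy)
  rwa [hktA, hkA, hkA, ← add_div, le_div_iff₀ (vtx_pos hp0 y)] at this

lemma exists_le_survival_of_PLE (hVD : G.VD) (hF : G.memW0 F) (hPLE : G.PLE F) :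
    ∃ a > 0, ∃ ε > 0, ∀ (x : Γ) (R : ℕ), 0 < R → ∀ A : Finset Γ, (A : Set Γ) = G.ball x R →
      ∀ n : ℕ, F x 0 < n → (n : ℝ) ≤ ε * F x R → a ≤ G.survival A n x := by
  obtain ⟨D, hD0, hD⟩ := hVD
  obtain ⟨c, δ, ε, hc, -, hδ, hδ1, hε, hε1, hPLE⟩ := hPLE
  obtain ⟨k, hk⟩ := pow_unbounded_of_one_lt δ⁻¹ one_lt_two
  have hkδ : 1 ≤ 2 ^ k * δ := by rw [inv_lt_iff_one_lt_mul₀ hδ] at hk; exact hk.le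
  refine ⟨c / (2 * D ^ k), by positivity, ε, hε, fun x R hR A hA n hn hnR => ?_⟩
  set f := invF' F x n
  have hf : (1 : ℝ) ≤ f := by exact_mod_cast hF.one_le_invF' hn
  have hfn : (f : ℝ) ≤ n := by exact_mod_cast hF.invF'_le_self x n
  have hfR : (f : ℝ) ≤ R := by
    have := hF.natCast_le x R
    exact_mod_cast invF'_le_of_le (by nlinarith : (n : ℝ) ≤ F x R)
  have hball : G.ball x (δ * f) ⊆ A := fun y (hy : (G.dist x y : ℝ) < δ * f) => by
    rw [hA]; show (G.dist x y : ℝ) < R; nlinarith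
  have hPLE' : ∀ y ∈ G.ball x (δ * f), c / G.vol x f ≤ G.hktA A n x y := fun y hy => by
    rw [hA]
    exact hPLE x R hR n y hnR (lt_min (by nlinarith [show (G.dist x y : ℝ) < δ * f from hy]) hy)
  have hdoubling : G.vol x f ≤ D ^ k * G.vol x (δ * f) := by
    refine (vol_mono hp0 x ?_).trans (vol_two_pow_mul_le hD0.le hD x (by positivity) k)
    nlinarith
  have hratio : c / D ^ k ≤ c / G.vol x f * G.vol x (δ * f) := by
    rw [div_mul_eq_mul_div, le_div_iff₀ (vol_pos hp0 x (by positivity)), div_mul_eq_mul_div,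
      div_le_iff₀ (by positivity)]
    linarith [mul_le_mul_of_nonneg_left hdoubling hc.le]
  calc c / (2 * D ^ k) = c / D ^ k / 2 := by ring
    _ ≤ (G.survival A n x + G.survival A (n + 1) x) / 2 := by
        gcongr; exact hratio.trans (mul_vol_le_survival hp0 hball hPLE')
    _ ≤ G.survival A n x := by linarith [survival_succ_le hp0 (A := A) n x]

lemma exists_pos_lt_one_le_kerP :
    ∃ p, 0 < p ∧ p < 1 ∧ ∀ x y, G.adj x y → p ≤ G.kerP x y := by
  obtain ⟨p, hp, hker⟩ := hp0
  exact ⟨min p (1 / 2), by positivity, (min_le_right _ _).trans_lt (by norm_num),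
    fun x y h => (min_le_left _ _).trans (hker x y h)⟩

lemma exists_survival_ball_le {R : ℕ} (hR : 0 < R) :
    ∃ θ, 0 < θ ∧ θ < 1 ∧ ∀ (x : Γ) (A : Finset Γ), (A : Set Γ) = G.ball x R →
      ∀ n, G.survival A n x ≤ θ ^ (n / (2 * R)) := by
  obtain ⟨p, hp, hp1, hker⟩ := exists_pos_lt_one_le_kerP hp0
  refine ⟨1 - p ^ (2 * R), sub_pos.2 (pow_lt_one₀ hp.le hp1 (by omega)),
    sub_lt_self _ (by positivity), fun x A hA n => ?_⟩
  refine survival_le_pow_div hp hp1 hker (fun y hy => ?_) n x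
  rw [← Finset.mem_coe, hA] at hy
  obtain ⟨z, hyz, hz⟩ := exists_adjN_notMem_ball hp0 hy
  exact ⟨z, hyz, by rwa [← Finset.mem_coe, hA]⟩

lemma hasSum_survival_ball {x : Γ} {R : ℕ} (hR : 0 < R) {A : Finset Γ}
    (hA : (A : Set Γ) = G.ball x R) :
    HasSum (fun n => G.survival A n x) (G.meanE x R) := by
  obtain ⟨θ, hθ0, hθ1, hθ⟩ := exists_survival_ball_le hp0 hR
  rw [meanE, ← hA]
  exact hasSum_survival hθ0 hθ1 (by omega) (hθ x A hA)

lemma exists_forall_lt_of_le_survival {R : ℕ} (hR : 0 < R) {a : ℝ} (ha : 0 < a) :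
    ∃ N : ℕ, ∀ (x : Γ) (A : Finset Γ), (A : Set Γ) = G.ball x R →
      ∀ n, a ≤ G.survival A n x → n < N := by
  obtain ⟨θ, hθ0, hθ1, hθ⟩ := exists_survival_ball_le hp0 hR
  obtain ⟨K, hK⟩ := exists_pow_lt_of_lt_one ha hθ1
  refine ⟨K * (2 * R), fun x A hA n hn => lt_of_not_ge fun hKn => ?_⟩
  have hKn' : K ≤ n / (2 * R) := (Nat.le_div_iff_mul_le (by omega)).2 hKn
  linarith [hθ x A hA n, pow_le_pow_of_le_one hθ0.le hθ1.le hKn']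

lemma exists_forall_F_one_lt (hF : G.memW0 F) {a ε : ℝ} (ha : 0 < a) (hε : 0 < ε)
    (hS : ∀ (x : Γ) (R : ℕ), 0 < R → ∀ A : Finset Γ, (A : Set Γ) = G.ball x R →
      ∀ n : ℕ, F x 0 < n → (n : ℝ) ≤ ε * F x R → a ≤ G.survival A n x) :
    ∃ N : ℕ, ∀ x, F x 1 < N := by
  obtain ⟨⟨_, -, β', hβ', cF, hcF, _, -, hreg⟩, -, -⟩ := id hF
  obtain ⟨R₀, hR₀F, hR₀⟩ : ∃ R₀ : ℕ, 2 / (ε * cF) ≤ (R₀ : ℝ) ^ β' ∧ 1 < R₀ :=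
    (((tendsto_rpow_atTop hβ').comp tendsto_natCast_atTop_atTop).eventually_ge_atTop _).and
      (Filter.eventually_gt_atTop 1) |>.exists
  obtain ⟨N, hN⟩ := exists_forall_lt_of_le_survival hp0 (by omega : 0 < R₀) ha
  refine ⟨N, fun x => ?_⟩
  have hF01 : F x 0 + 1 ≤ F x 1 := hF.2.2 x 0
  have hF1 : 1 ≤ F x 1 := by linarith [hF.zero_le x]
  have hgrowth : cF * (R₀ : ℝ) ^ β' * F x 1 ≤ F x R₀ := by
    have := (hreg x x R₀ 1 one_pos hR₀ (by simp; omega)).1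
    rwa [Nat.cast_one, div_one, le_div_iff₀ (by linarith)] at this
  have hR₀F' : 2 ≤ ε * (cF * (R₀ : ℝ) ^ β') := by
    rw [div_le_iff₀ (by positivity)] at hR₀F; linarith
  set n := ⌊F x 1⌋₊ + 1
  have hn : F x 1 < n := by simpa [n] using Nat.lt_floor_add_one (F x 1)
  have hnR₀ : (n : ℝ) ≤ ε * F x R₀ := by
    have : (n : ℝ) ≤ F x 1 + 1 := by simpa [n] using Nat.floor_le (by linarith : 0 ≤ F x 1)
    nlinarith
  have hn0 : F x 0 < n := by linarith
  have hA := (ball_finite hp0 x R₀).coe_toFinset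
  exact hn.trans (Nat.cast_lt.2 (hN x _ hA n (hS x R₀ (by omega) _ hA n hn0 hnR₀)))

end ExitTime

end WGraph

/-- under (p0) and (VD), if F ∈ W₀ and PLE(F) holds, then
E(x,R) ≥ c·F(x,R). -/
theorem statement12 {Γ : Type*} (G : WGraph Γ) (hp0 : G.p0cond) (hVD : G.VD)
    (F : Γ → ℕ → ℝ) (hF : G.memW0 F) (hPLE : G.PLE F) :
    ∃ c > (0:ℝ), ∀ (x : Γ) (R : ℕ), 0 < R → c * F x R ≤ G.meanE x (R:ℝ) := by
  obtain ⟨a, ha, ε, hε, hS⟩ := WGraph.exists_le_survival_of_PLE hp0 hVD hF hPLE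
  obtain ⟨N, hN⟩ := WGraph.exists_forall_F_one_lt hp0 hF ha hε hS
  refine ⟨min (a * ε / 2) (ε / (2 * (N + 1))), by positivity, fun x R hR => ?_⟩
  set A := (G.ball_finite hp0 x R).toFinset
  have hA : (A : Set Γ) = G.ball x R := Set.Finite.coe_toFinset _
  have hE := WGraph.hasSum_survival_ball hp0 hR hA
  have hE1 : 1 ≤ G.meanE x R := by
    rw [← WGraph.survival_zero (A := A) ((Set.Finite.mem_toFinset _).2 (G.mem_ball_self x
      (by exact_mod_cast hR)))]
    exact le_hasSum hE 0 fun n _ => G.survival_nonneg n x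
  have hEF : a * (ε * F x R - N) ≤ G.meanE x R :=
    mul_sub_le_of_hasSum ha.le (fun n => G.survival_nonneg n x) hE fun n hn hnR =>
      hS x R hR A hA n (by linarith [hF.2.2 x 0, hN x, (Nat.cast_le.2 hn : (N : ℝ) ≤ n)]) hnR
  have hFR : 0 ≤ F x R := (Nat.cast_nonneg R).trans (hF.natCast_le x R)
  rcases le_or_gt (2 * N : ℝ) (ε * F x R) with hlarge | hsmall
  · calc min (a * ε / 2) (ε / (2 * (N + 1))) * F x R ≤ a * ε / 2 * F x R :=
          mul_le_mul_of_nonneg_right (min_le_left _ _) hFR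
      _ ≤ a * (ε * F x R - N) := by nlinarith
      _ ≤ G.meanE x R := hEF
  · calc min (a * ε / 2) (ε / (2 * (N + 1))) * F x R ≤ ε / (2 * (N + 1)) * F x R :=
          mul_le_mul_of_nonneg_right (min_le_right _ _) hFR
      _ ≤ 1 := by rw [div_mul_eq_mul_div, div_le_one (by positivity)]; linarith
      _ ≤ G.meanE x R := hE1
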